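/- arXiv:1006.1661 — 2 statements merged into one kernel-verified Lean document; each statement's English description precedes it below -/
import Mathlib

section
/- If B is a complex LLL-reduced basis with parameter δ and α = 1/(δ - 1/2), then ‖b₁‖ ≤ α^{(n-1)/2} λ₁, where λ₁ is the length of a shortest nonzero vector of the lattice generated by B over the Gaussian integers. -/
/-- The `i`-th column of a complex matrix, as a vector of `ℂⁿ`. -/
noncomputable def col {n : ℕ} (B : Matrix (Fin n) (Fin n) ℂ) (i : Fin n) :
    EuclideanSpace ℂ (Fin n) :=
  (WithLp.equiv 2 (Fin n → ℂ)).symm (fun x => B x i)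

/-- Gram-Schmidt orthogonalization of a family of vectors in ℂⁿ. -/
noncomputable def gso {n : ℕ} (b : Fin n → EuclideanSpace ℂ (Fin n)) :
    Fin n → EuclideanSpace ℂ (Fin n) :=
  @InnerProductSpace.gramSchmidt ℂ _ _ _ _ (Fin n) _ _ (inferInstance : WellFoundedLT (Fin n)) b

/-- Gram-Schmidt coefficient μ_{i,j} = ⟨bᵢ, b̂ⱼ⟩ / ‖b̂ⱼ‖². -/
noncomputable def mu {n : ℕ} (b : Fin n → EuclideanSpace ℂ (Fin n)) (i j : Fin n) : ℂ :=
  (inner ℂ (gso b j) (b i) : ℂ) / ((‖gso b j‖ ^ 2 : ℝ) : ℂ)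

/-- B is complex LLL-reduced with parameter δ: size-reduced plus the Lovász condition. -/
def LLLReduced {n : ℕ} (δ : ℝ) (b : Fin n → EuclideanSpace ℂ (Fin n)) : Prop :=
  (∀ i j : Fin n, j < i → |(mu b i j).re| ≤ 1/2 ∧ |(mu b i j).im| ≤ 1/2) ∧
  (∀ i j : Fin n, j.val + 1 = i.val →
    ‖gso b i‖^2 ≥ (δ - ‖mu b i j‖ ^ 2) * ‖gso b j‖^2)

/-!
Write `b̂ᵢ` for the Gram-Schmidt vectors and `α = 1 / (δ - 1/2)`. Size reduction gives
`‖μᵢ,ᵢ₋₁‖² ≤ 1/2`, so the Lovász condition yields `‖b̂ᵢ₋₁‖² ≤ α ‖b̂ᵢ‖²` and hence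
`‖b₁‖² = ‖b̂₁‖² ≤ α^(k-1) ‖b̂ₖ‖² ≤ α^(n-1) ‖b̂ₖ‖²` for every `k`, as `α ≥ 1`.
On the other hand, if `v = ∑ xᵢ bᵢ` is a nonzero lattice vector and `k` is the last index with
`xₖ ≠ 0`, then `⟪b̂ₖ, v⟫ = xₖ ‖b̂ₖ‖²`; since a nonzero Gaussian integer has modulus at least `1`,
Cauchy-Schwarz gives `‖b̂ₖ‖ ≤ ‖v‖`.
-/

open InnerProductSpace

section GramSchmidt

variable {𝕜 E ι : Type*} [RCLike 𝕜] [NormedAddCommGroup E] [InnerProductSpace 𝕜 E]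
  [LinearOrder ι] [LocallyFiniteOrderBot ι] [WellFoundedLT ι]

theorem inner_gramSchmidt_self (f : ι → E) (k : ι) :
    ⟪gramSchmidt 𝕜 f k, f k⟫_𝕜 = (‖gramSchmidt 𝕜 f k‖ : 𝕜) ^ 2 := by
  conv_lhs => rw [gramSchmidt_def'' 𝕜 f k]
  rw [inner_add_right, inner_sum, Finset.sum_eq_zero, add_zero, inner_self_eq_norm_sq_to_K]
  intro i hi
  rw [inner_smul_right, gramSchmidt_orthogonal 𝕜 f (Finset.mem_Iio.1 hi).ne', mul_zero]

theorem inner_gramSchmidt_sum_smul [Fintype ι] (f : ι → E) (c : ι → 𝕜) {k : ι}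
    (hc : ∀ i, k < i → c i = 0) :
    ⟪gramSchmidt 𝕜 f k, ∑ i, c i • f i⟫_𝕜 = c k * (‖gramSchmidt 𝕜 f k‖ : 𝕜) ^ 2 := by
  rw [inner_sum, Finset.sum_eq_single_of_mem k (Finset.mem_univ k), inner_smul_right,
    inner_gramSchmidt_self]
  intro i _ hik
  rcases hik.lt_or_gt with h | h
  · rw [inner_smul_right, gramSchmidt_inv_triangular 𝕜 f h, mul_zero]
  · rw [hc i h, zero_smul, inner_zero_right]

theorem norm_gramSchmidt_le_norm_sum_smul [Fintype ι] (f : ι → E) (c : ι → 𝕜) {k : ι}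
    (hc : ∀ i, k < i → c i = 0) (hk : 1 ≤ ‖c k‖) :
    ‖gramSchmidt 𝕜 f k‖ ≤ ‖∑ i, c i • f i‖ := by
  have h := norm_inner_le_norm (𝕜 := 𝕜) (gramSchmidt 𝕜 f k) (∑ i, c i • f i)
  rw [inner_gramSchmidt_sum_smul f c hc, norm_mul, norm_pow, RCLike.norm_ofReal,
    abs_norm] at h
  nlinarith [norm_nonneg (gramSchmidt 𝕜 f k), norm_nonneg (∑ i, c i • f i)]

end GramSchmidt

theorem exists_ne_zero_forall_gt_eq_zero {ι M : Type*} [Fintype ι] [LinearOrder ι] [Zero M]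
    {c : ι → M} (hc : c ≠ 0) : ∃ k, c k ≠ 0 ∧ ∀ i, k < i → c i = 0 := by
  classical
  obtain ⟨j, hj⟩ := Function.ne_iff.1 hc
  obtain ⟨k, hk, hmax⟩ := (Finset.univ.filter (c · ≠ 0)).exists_max_image id ⟨j, by simpa using hj⟩
  refine ⟨k, (Finset.mem_filter.1 hk).2, fun i hki => ?_⟩
  by_contra hi
  exact (hmax i (by simpa using hi)).not_gt hki

theorem GaussianInt.one_le_norm_toComplex {z : GaussianInt} (hz : z ≠ 0) : 1 ≤ ‖(z : ℂ)‖ := by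
  rw [← one_le_sq_iff₀ (_root_.norm_nonneg _), Complex.sq_norm, ← GaussianInt.intCast_real_norm]
  exact_mod_cast Int.add_one_le_of_lt (GaussianInt.norm_pos.2 hz)

theorem exists_norm_gramSchmidt_le_norm_sum_gaussianInt_smul {E ι : Type*}
    [NormedAddCommGroup E] [InnerProductSpace ℂ E] [Fintype ι] [LinearOrder ι]
    [LocallyFiniteOrderBot ι] [WellFoundedLT ι] (f : ι → E) {x : ι → GaussianInt} (hx : x ≠ 0) :
    ∃ k, ‖gramSchmidt ℂ f k‖ ≤ ‖∑ i, (x i : ℂ) • f i‖ := by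
  obtain ⟨k, hk, hgt⟩ := exists_ne_zero_forall_gt_eq_zero hx
  exact ⟨k, norm_gramSchmidt_le_norm_sum_smul f _
    (fun i hi => by rw [hgt i hi, GaussianInt.toComplex_zero])
    (GaussianInt.one_le_norm_toComplex hk)⟩

theorem gso_zero {n : ℕ} (hn : 0 < n) (b : Fin n → EuclideanSpace ℂ (Fin n)) :
    gso b ⟨0, hn⟩ = b ⟨0, hn⟩ := by
  have h : Finset.Iio (⟨0, hn⟩ : Fin n) = ∅ := by
    ext i
    simp [Fin.lt_def]
  rw [gso, gramSchmidt_def, h, Finset.sum_empty, sub_zero]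

namespace LLLReduced

variable {n : ℕ} {δ : ℝ} {b : Fin n → EuclideanSpace ℂ (Fin n)}

theorem norm_mu_sq_le (hb : LLLReduced δ b) {i j : Fin n} (hji : j < i) :
    ‖mu b i j‖ ^ 2 ≤ 1 / 2 := by
  obtain ⟨hre, him⟩ := hb.1 i j hji
  rw [Complex.sq_norm, Complex.normSq_apply]
  nlinarith [abs_nonneg (mu b i j).re, abs_nonneg (mu b i j).im,
    sq_abs (mu b i j).re, sq_abs (mu b i j).im]

theorem norm_gso_sq_le_succ (hb : LLLReduced δ b) {i j : Fin n} (hij : j.val + 1 = i.val) :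
    (δ - 1 / 2) * ‖gso b j‖ ^ 2 ≤ ‖gso b i‖ ^ 2 := by
  have hmu := hb.norm_mu_sq_le (show j < i by rw [Fin.lt_def]; omega)
  nlinarith [hb.2 i j hij, sq_nonneg ‖gso b j‖]

theorem norm_gso_zero_sq_le (hb : LLLReduced δ b) (hδ : 1 / 2 < δ) (hn : 0 < n) :
    ∀ (k : ℕ) (hk : k < n), ‖gso b ⟨0, hn⟩‖ ^ 2 ≤ (1 / (δ - 1 / 2)) ^ k * ‖gso b ⟨k, hk⟩‖ ^ 2
  | 0, _ => by simp
  | k + 1, hk => by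
    have hstep := hb.norm_gso_sq_le_succ (i := ⟨k + 1, hk⟩) (j := ⟨k, by omega⟩) rfl
    calc ‖gso b ⟨0, hn⟩‖ ^ 2 ≤ (1 / (δ - 1 / 2)) ^ k * ‖gso b ⟨k, by omega⟩‖ ^ 2 :=
          norm_gso_zero_sq_le hb hδ hn k (by omega)
      _ ≤ (1 / (δ - 1 / 2)) ^ k * ((1 / (δ - 1 / 2)) * ‖gso b ⟨k + 1, hk⟩‖ ^ 2) := by
          gcongr
          rw [div_mul_eq_mul_div, le_div_iff₀ (by linarith), one_mul]
          linarith
      _ = (1 / (δ - 1 / 2)) ^ (k + 1) * ‖gso b ⟨k + 1, hk⟩‖ ^ 2 := by ring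

theorem norm_zero_le (hb : LLLReduced δ b) (hδ1 : 1 / 2 < δ) (hδ2 : δ ≤ 1) (hn : 0 < n)
    (k : Fin n) :
    ‖b ⟨0, hn⟩‖ ≤ (1 / (δ - 1 / 2)) ^ (((n : ℝ) - 1) / 2) * ‖gso b k‖ := by
  set α := 1 / (δ - 1 / 2)
  have hα : 1 ≤ α := by rw [le_div_iff₀ (by linarith)]; linarith
  have hαpow : (α ^ (((n : ℝ) - 1) / 2)) ^ 2 = α ^ (n - 1) := by
    rw [← Real.rpow_mul_natCast (by positivity), ← Real.rpow_natCast, Nat.cast_sub hn]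
    push_cast
    ring_nf
  rw [← gso_zero hn b, ← pow_le_pow_iff_left₀ (norm_nonneg _) (by positivity) two_ne_zero,
    mul_pow, hαpow]
  calc ‖gso b ⟨0, hn⟩‖ ^ 2 ≤ α ^ (k : ℕ) * ‖gso b k‖ ^ 2 := hb.norm_gso_zero_sq_le hδ1 hn k k.2
    _ ≤ α ^ (n - 1) * ‖gso b k‖ ^ 2 := by gcongr; omega

end LLLReduced

theorem stmt3_general (n : ℕ) (hn : 0 < n) (δ : ℝ) (hδ1 : 1/2 < δ) (hδ2 : δ ≤ 1)
    (B : Matrix (Fin n) (Fin n) ℂ)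
    (hLLL : LLLReduced δ (col B)) (lam : ℝ)
    (hmem : ∃ x : Fin n → GaussianInt,
      (∑ i, GaussianInt.toComplex (x i) • col B i) ≠ 0 ∧
      ‖∑ i, GaussianInt.toComplex (x i) • col B i‖ = lam) :
    ‖col B ⟨0, hn⟩‖ ≤ (1 / (δ - 1/2)) ^ (((n : ℝ) - 1) / 2) * lam := by
  obtain ⟨x, hv, rfl⟩ := hmem
  have hx : x ≠ 0 := by
    rintro rfl
    simp at hv
  obtain ⟨k, hk⟩ := exists_norm_gramSchmidt_le_norm_sum_gaussianInt_smul (col B) hx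
  calc ‖col B ⟨0, hn⟩‖ ≤ (1 / (δ - 1 / 2)) ^ (((n : ℝ) - 1) / 2) * ‖gso (col B) k‖ :=
        hLLL.norm_zero_le hδ1 hδ2 hn k
    _ ≤ _ := by gcongr; exact hk

theorem stmt3 (n : ℕ) (hn : 0 < n) (δ : ℝ) (hδ1 : 1/2 < δ) (hδ2 : δ ≤ 1)
    (B : Matrix (Fin n) (Fin n) ℂ) (hdet : B.det ≠ 0)
    (hLLL : LLLReduced δ (col B)) (lam : ℝ)
    (hmem : ∃ x : Fin n → GaussianInt,
      (∑ i, GaussianInt.toComplex (x i) • col B i) ≠ 0 ∧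
      ‖∑ i, GaussianInt.toComplex (x i) • col B i‖ = lam)
    (hmin : ∀ x : Fin n → GaussianInt,
      (∑ i, GaussianInt.toComplex (x i) • col B i) ≠ 0 →
      lam ≤ ‖∑ i, GaussianInt.toComplex (x i) • col B i‖) :
    ‖col B ⟨0, hn⟩‖ ≤ (1 / (δ - 1/2)) ^ (((n : ℝ) - 1) / 2) * lam :=
  stmt3_general n hn δ hδ1 hδ2 B hLLL lam hmem
end

section
/- After the size-reduction update b_k := b_k - ⌈μ_{k,l}⌋ b_l with l < k, the new Gram-Schmidt coefficient μ'_{k,l} satisfies |Re(μ'_{k,l})| ≤ 1/2 and |Im(μ'_{k,l})| ≤ 1/2, and the coefficients μ_{i,j} for i ≠ k are unchanged. -/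
/-- Round a complex number by rounding real and imaginary parts to nearest integers. -/
noncomputable def roundC (z : ℂ) : ℂ :=
  ((round z.re : ℤ) : ℂ) + ((round z.im : ℤ) : ℂ) * Complex.I

/-! The update `b_k := b_k - z • b_l` with `l < k` leaves the span of every initial segment
`b_i, i < j` unchanged, and `b̂_j` is the unique vector with `b_j - b̂_j` in that span and `b̂_j`
orthogonal to it; hence all Gram–Schmidt vectors are unchanged. So `μ_{i,j}` can only change for
`i = k`, and there `μ'_{k,l} = μ_{k,l} - z μ_{l,l}`. If `b̂_l ≠ 0` then `μ_{l,l} = 1` and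
`μ'_{k,l} = μ_{k,l} - ⌈μ_{k,l}⌋`; if `b̂_l = 0` every `μ_{i,l}` is `0` because `x / 0 = 0`. -/

open Submodule Set Function

namespace InnerProductSpace

variable {𝕜 E ι : Type*} [RCLike 𝕜] [NormedAddCommGroup E] [InnerProductSpace 𝕜 E]

section Preorder

variable [Preorder ι] [DecidableEq ι]

theorem span_image_update_sub_smul_le {f : ι → E} {k l : ι} (hlk : l < k) (z : 𝕜) (j : ι) :
    span 𝕜 (update f k (f k - z • f l) '' Iio j) ≤ span 𝕜 (f '' Iio j) := by
  rw [span_le]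
  rintro _ ⟨i, hi, rfl⟩
  rcases eq_or_ne i k with rfl | hik
  · rw [update_self]
    exact sub_mem (subset_span ⟨i, hi, rfl⟩) (smul_mem _ _ (subset_span ⟨l, hlk.trans hi, rfl⟩))
  · rw [update_of_ne hik]
    exact subset_span ⟨i, hi, rfl⟩

theorem span_image_update_sub_smul {f : ι → E} {k l : ι} (hlk : l < k) (z : 𝕜) (j : ι) :
    span 𝕜 (update f k (f k - z • f l) '' Iio j) = span 𝕜 (f '' Iio j) := by
  refine le_antisymm (span_image_update_sub_smul_le hlk z j) ?_
  have hf : f = update (update f k (f k - z • f l)) k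
      (update f k (f k - z • f l) k - (-z) • update f k (f k - z • f l) l) := by
    simp [update_of_ne hlk.ne]
  conv_lhs => rw [hf]
  exact span_image_update_sub_smul_le hlk (-z) j

end Preorder

variable [LinearOrder ι] [LocallyFiniteOrderBot ι] [WellFoundedLT ι]

theorem sub_gramSchmidt_mem_span (f : ι → E) (j : ι) :
    f j - gramSchmidt 𝕜 f j ∈ span 𝕜 (f '' Iio j) := by
  rw [← span_gramSchmidt_Iio 𝕜 f j, gramSchmidt_def 𝕜 f j, sub_sub_cancel]
  refine sum_mem fun i hi => ?_
  have h : (𝕜 ∙ gramSchmidt 𝕜 f i) ≤ span 𝕜 (gramSchmidt 𝕜 f '' Iio j) :=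
    span_mono (singleton_subset_iff.2 (mem_image_of_mem _ (Finset.mem_Iio.1 hi)))
  exact h (coe_mem _)

theorem gramSchmidt_mem_orthogonal_span (f : ι → E) (j : ι) :
    gramSchmidt 𝕜 f j ∈ (span 𝕜 (f '' Iio j))ᗮ := by
  have h : span 𝕜 (f '' Iio j) ≤ (𝕜 ∙ gramSchmidt 𝕜 f j)ᗮ := by
    rw [span_le]
    rintro _ ⟨i, hi, rfl⟩
    exact mem_orthogonal_singleton_iff_inner_right.2 (gramSchmidt_inv_triangular 𝕜 f hi)
  exact (mem_orthogonal' _ _).2 fun u hu => mem_orthogonal_singleton_iff_inner_right.1 (h hu)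

theorem gramSchmidt_eq_of_sub_mem_of_mem_orthogonal {f : ι → E} {j : ι} {v : E}
    (hsub : f j - v ∈ span 𝕜 (f '' Iio j)) (horth : v ∈ (span 𝕜 (f '' Iio j))ᗮ) :
    gramSchmidt 𝕜 f j = v := by
  have hmem : v - gramSchmidt 𝕜 f j ∈ span 𝕜 (f '' Iio j) := by
    simpa using sub_mem (sub_gramSchmidt_mem_span f j) hsub
  have horth' : v - gramSchmidt 𝕜 f j ∈ (span 𝕜 (f '' Iio j))ᗮ :=
    sub_mem horth (gramSchmidt_mem_orthogonal_span f j)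
  exact (sub_eq_zero.1 (inner_self_eq_zero.1 (inner_right_of_mem_orthogonal hmem horth'))).symm

theorem inner_gramSchmidt_self (f : ι → E) (j : ι) :
    ⟪gramSchmidt 𝕜 f j, f j⟫_𝕜 = ‖gramSchmidt 𝕜 f j‖ ^ 2 := by
  have h : ⟪gramSchmidt 𝕜 f j, f j - gramSchmidt 𝕜 f j⟫_𝕜 = 0 :=
    (mem_orthogonal' _ _).1 (gramSchmidt_mem_orthogonal_span f j) _ (sub_gramSchmidt_mem_span f j)
  rw [inner_sub_right, sub_eq_zero, inner_self_eq_norm_sq_to_K] at h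
  exact h

theorem gramSchmidt_update_sub_smul [DecidableEq ι] {f : ι → E} {k l : ι} (hlk : l < k) (z : 𝕜) :
    gramSchmidt 𝕜 (update f k (f k - z • f l)) = gramSchmidt 𝕜 f := by
  funext j
  refine gramSchmidt_eq_of_sub_mem_of_mem_orthogonal ?_ ?_ <;>
    rw [span_image_update_sub_smul hlk z j]
  · rcases eq_or_ne j k with rfl | hjk
    · rw [update_self, sub_right_comm]
      exact sub_mem (sub_gramSchmidt_mem_span f j) (smul_mem _ _ (subset_span ⟨l, hlk, rfl⟩))
    · rw [update_of_ne hjk]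
      exact sub_gramSchmidt_mem_span f j
  · exact gramSchmidt_mem_orthogonal_span f j

end InnerProductSpace

theorem gso_eq_gramSchmidt {n : ℕ} (b : Fin n → EuclideanSpace ℂ (Fin n)) :
    gso b = InnerProductSpace.gramSchmidt ℂ b :=
  rfl

theorem gso_update_sub_smul {n : ℕ} {b : Fin n → EuclideanSpace ℂ (Fin n)} {k l : Fin n}
    (hlk : l < k) (z : ℂ) : gso (update b k (b k - z • b l)) = gso b :=
  InnerProductSpace.gramSchmidt_update_sub_smul hlk z

theorem mu_update_sub_smul_of_ne {n : ℕ} {b : Fin n → EuclideanSpace ℂ (Fin n)} {k l : Fin n}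
    (hlk : l < k) (z : ℂ) {i : Fin n} (hik : i ≠ k) (j : Fin n) :
    mu (update b k (b k - z • b l)) i j = mu b i j := by
  rw [mu, mu, gso_update_sub_smul hlk, update_of_ne hik]

theorem mu_self {n : ℕ} {b : Fin n → EuclideanSpace ℂ (Fin n)} {l : Fin n} (hl : gso b l ≠ 0) :
    mu b l l = 1 := by
  rw [mu, gso_eq_gramSchmidt, InnerProductSpace.inner_gramSchmidt_self, ← gso_eq_gramSchmidt]
  push_cast
  exact div_self (by simpa using hl)

theorem mu_update_sub_smul_self {n : ℕ} {b : Fin n → EuclideanSpace ℂ (Fin n)} {k l : Fin n}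
    (hlk : l < k) (z : ℂ) :
    mu (update b k (b k - z • b l)) k l = mu b k l - z * mu b l l := by
  rw [mu, gso_update_sub_smul hlk, update_self, inner_sub_right, inner_smul_right, sub_div,
    mul_div_assoc, ← mu, ← mu]

theorem abs_re_sub_roundC_le (z : ℂ) : |(z - roundC z).re| ≤ 1 / 2 := by
  simpa [roundC] using abs_sub_round z.re

theorem abs_im_sub_roundC_le (z : ℂ) : |(z - roundC z).im| ≤ 1 / 2 := by
  simpa [roundC] using abs_sub_round z.im

theorem stmt6_general (n : ℕ) (b : Fin n → EuclideanSpace ℂ (Fin n))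
    (k l : Fin n) (hlk : l < k)
    (b' : Fin n → EuclideanSpace ℂ (Fin n))
    (hb' : b' = Function.update b k (b k - roundC (mu b k l) • b l)) :
    (|(mu b' k l).re| ≤ 1/2 ∧ |(mu b' k l).im| ≤ 1/2) ∧
    (∀ i j : Fin n, i ≠ k → mu b' i j = mu b i j) := by
  subst hb'
  refine ⟨?_, fun i j hik => mu_update_sub_smul_of_ne hlk _ hik j⟩
  rw [mu_update_sub_smul_self hlk]
  by_cases hl : gso b l = 0
  · have hzero (i : Fin n) : mu b i l = 0 := by simp [mu, hl]
    simp [hzero]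
  · rw [mu_self hl, mul_one]
    exact ⟨abs_re_sub_roundC_le _, abs_im_sub_roundC_le _⟩

theorem stmt6 (n : ℕ) (b : Fin n → EuclideanSpace ℂ (Fin n)) (hb : LinearIndependent ℂ b)
    (k l : Fin n) (hlk : l < k)
    (b' : Fin n → EuclideanSpace ℂ (Fin n))
    (hb' : b' = Function.update b k (b k - roundC (mu b k l) • b l)) :
    (|(mu b' k l).re| ≤ 1/2 ∧ |(mu b' k l).im| ≤ 1/2) ∧
    (∀ i j : Fin n, i ≠ k → mu b' i j = mu b i j) :=
  stmt6_general n b k l hlk b' hb'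
end
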